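/- Let X ⊆ {D,T,4} and L = LIK X. If D ∈ X then the canonical relation R_L is serial on prime theories (every prime theory has an R_L-successor that is a prime theory); if T ∈ X then R_L is reflexive on prime theories; if 4 ∈ X then R_L is transitive on prime theories. -/
import Mathlib


/-- Formulas of intuitionistic modal logic. -/
inductive Formula : Type where
  | atom : ℕ → Formula
  | top  : Formula
  | bot  : Formula
  | and  : Formula → Formula → Formula
  | or   : Formula → Formula → Formula
  | imp  : Formula → Formula → Formula
  | box  : Formula → Formula
  | dia  : Formula → Formula
deriving DecidableEq


/-- The three optional extension axioms D, T, 4. -/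
inductive ModAx : Type where
  | D : ModAx
  | T : ModAx
  | Four : ModAx
deriving DecidableEq

/-- The Hilbert system LIK X: a complete Hilbert base for intuitionistic
propositional logic (as axiom schemata, hence all substitution instances of
IPL theorems are derivable), the modal axioms K□, K◇, N, DP, RV, the
extension axioms D, T, 4 according to membership in `X`, with rules
modus ponens and necessitation. -/
inductive LIK (X : Set ModAx) : Formula → Prop where
  | a1 (A B : Formula) : LIK X (A.imp (B.imp A))
  | a2 (A B C : Formula) : LIK X ((A.imp (B.imp C)).imp ((A.imp B).imp (A.imp C)))
  | a3 (A B : Formula) : LIK X ((A.and B).imp A)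
  | a4 (A B : Formula) : LIK X ((A.and B).imp B)
  | a5 (A B : Formula) : LIK X (A.imp (B.imp (A.and B)))
  | a6 (A B : Formula) : LIK X (A.imp (A.or B))
  | a7 (A B : Formula) : LIK X (B.imp (A.or B))
  | a8 (A B C : Formula) : LIK X ((A.imp C).imp ((B.imp C).imp ((A.or B).imp C)))
  | exfalso (A : Formula) : LIK X (Formula.bot.imp A)
  | truth : LIK X Formula.top
  | kbox (A B : Formula) :
      LIK X ((Formula.box (A.imp B)).imp ((Formula.box A).imp (Formula.box B)))
  | kdia (A B : Formula) :
      LIK X ((Formula.box (A.imp B)).imp ((Formula.dia A).imp (Formula.dia B)))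
  | nax : LIK X ((Formula.dia Formula.bot).imp Formula.bot)
  | dp (A B : Formula) :
      LIK X ((Formula.dia (A.or B)).imp ((Formula.dia A).or (Formula.dia B)))
  | rv (A B : Formula) :
      LIK X ((Formula.box (A.or B)).imp ((Formula.dia A).or (Formula.box B)))
  | dax : ModAx.D ∈ X → LIK X (Formula.dia Formula.top)
  | tax (A : Formula) : ModAx.T ∈ X →
      LIK X (((Formula.box A).imp A).and (A.imp (Formula.dia A)))
  | fourax (A : Formula) : ModAx.Four ∈ X →
      LIK X (((Formula.box A).imp (Formula.box (Formula.box A))).and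
        ((Formula.dia (Formula.dia A)).imp (Formula.dia A)))
  | mp (A B : Formula) : LIK X (A.imp B) → LIK X A → LIK X B
  | nec (A : Formula) : LIK X A → LIK X (Formula.box A)

/-- A theory for L = LIK X: contains all L-derivable formulas and is closed
under modus ponens. -/
def IsTheory (X : Set ModAx) (Γ : Set Formula) : Prop :=
  (∀ A, LIK X A → A ∈ Γ) ∧ ∀ A B, Formula.imp A B ∈ Γ → A ∈ Γ → B ∈ Γ

/-- A prime theory: a proper theory (⊥ ∉ Γ) deciding disjunctions. -/
def IsPrime (X : Set ModAx) (Γ : Set Formula) : Prop :=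
  IsTheory X Γ ∧ Formula.bot ∉ Γ ∧ ∀ A B, Formula.or A B ∈ Γ → A ∈ Γ ∨ B ∈ Γ

/-- The canonical accessibility relation:
`R_L Γ Δ` iff `□Γ ⊆ Δ` and `◇Δ ⊆ Γ`. -/
def CanR (Γ Δ : Set Formula) : Prop :=
  (∀ A, Formula.box A ∈ Γ → A ∈ Δ) ∧ (∀ A, A ∈ Δ → Formula.dia A ∈ Γ)

section Aux
variable {X : Set ModAx}

lemma likId (X : Set ModAx) (A : Formula) : LIK X (A.imp A) :=
  LIK.mp _ _ (LIK.mp _ _ (LIK.a2 A (A.imp A) A) (LIK.a1 A (A.imp A))) (LIK.a1 A A)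

lemma likTrans {A B C : Formula} (h1 : LIK X (A.imp B)) (h2 : LIK X (B.imp C)) :
    LIK X (A.imp C) :=
  LIK.mp _ _ (LIK.mp _ _ (LIK.a2 A B C) (LIK.mp _ _ (LIK.a1 (B.imp C) A) h2)) h1

/-- With D, `□A ⊃ ◇A` is derivable. -/
lemma likBoxDia (hD : ModAx.D ∈ X) (A : Formula) :
    LIK X ((Formula.box A).imp (Formula.dia A)) := by
  have h1 : LIK X ((Formula.box A).imp (Formula.box (Formula.top.imp A))) :=
    LIK.mp _ _ (LIK.kbox A (Formula.top.imp A)) (LIK.nec _ (LIK.a1 A Formula.top))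
  have h2 : LIK X ((Formula.box A).imp ((Formula.dia Formula.top).imp (Formula.dia A))) :=
    likTrans h1 (LIK.kdia Formula.top A)
  have h3 : LIK X ((Formula.box A).imp (Formula.dia Formula.top)) :=
    LIK.mp _ _ (LIK.a1 _ _) (LIK.dax hD)
  exact LIK.mp _ _ (LIK.mp _ _ (LIK.a2 _ _ _) h2) h3

lemma thMP {Γ : Set Formula} (h : IsTheory X Γ) {A B : Formula}
    (hi : A.imp B ∈ Γ) (ha : A ∈ Γ) : B ∈ Γ := h.2 A B hi ha

lemma thAx {Γ : Set Formula} (h : IsTheory X Γ) {A : Formula} (hA : LIK X A) : A ∈ Γ :=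
  h.1 A hA

/-- Transitivity of implication inside a theory. -/
lemma thImpTrans {Γ : Set Formula} (h : IsTheory X Γ) {A B C : Formula}
    (h1 : A.imp B ∈ Γ) (h2 : B.imp C ∈ Γ) : A.imp C ∈ Γ := by
  have hABC : A.imp (B.imp C) ∈ Γ := thMP h (thAx h (LIK.a1 (B.imp C) A)) h2
  exact thMP h (thMP h (thAx h (LIK.a2 A B C)) hABC) h1

/-- The theory generated by a theory `Δ` together with `A`. -/
def Ded (Δ : Set Formula) (A : Formula) : Set Formula := {C | A.imp C ∈ Δ}

lemma dedTheory {Δ : Set Formula} (h : IsTheory X Δ) (A : Formula) :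
    IsTheory X (Ded Δ A) := by
  constructor
  · intro B hB; exact thMP h (thAx h (LIK.a1 B A)) (thAx h hB)
  · intro B C hi hb; exact thMP h (thMP h (thAx h (LIK.a2 A B C)) hi) hb

lemma dedSub {Δ : Set Formula} (h : IsTheory X Δ) (A : Formula) : Δ ⊆ Ded Δ A :=
  fun B hB => thMP h (thAx h (LIK.a1 B A)) hB

lemma dedSelf {Δ : Set Formula} (h : IsTheory X Δ) (A : Formula) : A ∈ Ded Δ A :=
  thAx h (likId X A)

end Aux

/-- Seriality, reflexivity and transitivity of the canonical relation on
prime theories according to the extension axioms present. -/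
theorem canonical_serial_refl_trans (X : Set ModAx) :
    (ModAx.D ∈ X → ∀ Γ : Set Formula, IsPrime X Γ →
      ∃ Δ : Set Formula, IsPrime X Δ ∧ CanR Γ Δ) ∧
    (ModAx.T ∈ X → ∀ Γ : Set Formula, IsPrime X Γ → CanR Γ Γ) ∧
    (ModAx.Four ∈ X → ∀ Γ Δ Λ : Set Formula,
      IsPrime X Γ → IsPrime X Δ → IsPrime X Λ →
      CanR Γ Δ → CanR Δ Λ → CanR Γ Λ) := by
  refine ⟨?_, ?_, ?_⟩
  · -- Seriality from D
    intro hD Γ hΓ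
    obtain ⟨hT, hBot, hPrime⟩ := hΓ
    -- the base theory and the ideal to avoid
    set Δ₀ : Set Formula := {A | Formula.box A ∈ Γ} with hΔ₀def
    set S : Set (Set Formula) :=
      {Δ | IsTheory X Δ ∧ Δ₀ ⊆ Δ ∧ ∀ A ∈ Δ, Formula.dia A ∈ Γ} with hSdef
    have hΔ₀theory : IsTheory X Δ₀ := by
      constructor
      · intro A hA; exact thAx hT (LIK.nec A hA)
      · intro A B hi ha
        exact thMP hT (thMP hT (thAx hT (LIK.kbox A B)) hi) ha
    have hΔ₀S : Δ₀ ∈ S := by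
      refine ⟨hΔ₀theory, le_refl _, ?_⟩
      intro A hA
      exact thMP hT (thAx hT (likBoxDia hD A)) hA
    -- Zorn
    have hzorn : ∃ m, Δ₀ ⊆ m ∧ Maximal (· ∈ S) m := by
      apply zorn_subset_nonempty
      · intro c hcS hchain hcne
        refine ⟨⋃₀ c, ⟨⟨?_, ?_⟩, ?_, ?_⟩, fun s hs => Set.subset_sUnion_of_mem hs⟩
        · intro A hA
          obtain ⟨s, hs⟩ := hcne
          exact Set.mem_sUnion.2 ⟨s, hs, (hcS hs).1.1 A hA⟩
        · intro A B hi ha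
          obtain ⟨s, hsC, hiS⟩ := Set.mem_sUnion.1 hi
          obtain ⟨t, htC, haT⟩ := Set.mem_sUnion.1 ha
          rcases hchain.total hsC htC with h | h
          · exact Set.mem_sUnion.2 ⟨t, htC, (hcS htC).1.2 A B (h hiS) haT⟩
          · exact Set.mem_sUnion.2 ⟨s, hsC, (hcS hsC).1.2 A B hiS (h haT)⟩
        · intro A hA
          obtain ⟨s, hs⟩ := hcne
          exact Set.mem_sUnion.2 ⟨s, hs, (hcS hs).2.1 hA⟩
        · intro A hA
          obtain ⟨s, hsC, hAs⟩ := Set.mem_sUnion.1 hA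
          exact (hcS hsC).2.2 A hAs
      · exact hΔ₀S
    obtain ⟨Δ, hΔ₀Δ, hmax⟩ := hzorn
    obtain ⟨hΔth, hΔ₀sub, hΔdia⟩ := hmax.1
    have hbotΔ : Formula.bot ∉ Δ := by
      intro hb
      exact hBot (thMP hT (thAx hT LIK.nax) (hΔdia _ hb))
    -- primeness by maximality
    have hprimeΔ : ∀ A B, Formula.or A B ∈ Δ → A ∈ Δ ∨ B ∈ Δ := by
      intro A B hAB
      by_contra hc
      push_neg at hc
      obtain ⟨hA, hB⟩ := hc
      -- both extensions must leave S, i.e. hit the avoided set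
      have key : ∀ E : Formula, E ∉ Δ →
          ∃ C, E.imp C ∈ Δ ∧ Formula.dia C ∉ Γ := by
        intro E hE
        by_contra hno
        push_neg at hno
        have hDedS : Ded Δ E ∈ S := by
          refine ⟨dedTheory hΔth E, fun B hB => dedSub hΔth E (hΔ₀sub hB), ?_⟩
          intro C hC
          by_contra hnC
          exact hnC (hno C hC)
        have : Ded Δ E ⊆ Δ := hmax.2 hDedS (dedSub hΔth E)
        exact hE (this (dedSelf hΔth E))
      obtain ⟨C, hAC, hCdia⟩ := key A hA
      obtain ⟨D2, hBD, hDdia⟩ := key B hB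
      -- A ⊃ C∨D, B ⊃ C∨D, hence C∨D ∈ Δ
      have h1 : A.imp (C.or D2) ∈ Δ :=
        thImpTrans hΔth hAC (thAx hΔth (LIK.a6 C D2))
      have h2 : B.imp (C.or D2) ∈ Δ :=
        thImpTrans hΔth hBD (thAx hΔth (LIK.a7 C D2))
      have h3 : (A.or B).imp (C.or D2) ∈ Δ :=
        thMP hΔth (thMP hΔth (thAx hΔth (LIK.a8 A B (C.or D2))) h1) h2
      have hCD : C.or D2 ∈ Δ := thMP hΔth h3 hAB
      have hdiaCD : Formula.dia (C.or D2) ∈ Γ := hΔdia _ hCD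
      have : (Formula.dia C).or (Formula.dia D2) ∈ Γ :=
        thMP hT (thAx hT (LIK.dp C D2)) hdiaCD
      rcases hPrime _ _ this with h | h
      · exact hCdia h
      · exact hDdia h
    refine ⟨Δ, ⟨hΔth, hbotΔ, hprimeΔ⟩, ?_, ?_⟩
    · intro A hA; exact hΔ₀sub hA
    · intro A hA; exact hΔdia A hA
  · -- Reflexivity from T
    intro hTX Γ hΓ
    obtain ⟨hT, -, -⟩ := hΓ
    constructor
    · intro A hA
      have h := thAx hT (LIK.tax A hTX)
      exact thMP hT (thMP hT (thAx hT (LIK.a3 _ _)) h) hA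
    · intro A hA
      have h := thAx hT (LIK.tax A hTX)
      exact thMP hT (thMP hT (thAx hT (LIK.a4 _ _)) h) hA
  · -- Transitivity from 4
    intro h4 Γ Δ Λ hΓ hΔ hΛ hGD hDL
    obtain ⟨hTG, -, -⟩ := hΓ
    constructor
    · intro A hA
      have h := thAx hTG (LIK.fourax A h4)
      have hbb : Formula.box (Formula.box A) ∈ Γ :=
        thMP hTG (thMP hTG (thAx hTG (LIK.a3 _ _)) h) hA
      exact hDL.1 A (hGD.1 _ hbb)
    · intro A hA
      have hdd : Formula.dia (Formula.dia A) ∈ Γ := hGD.2 _ (hDL.2 A hA)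
      have h := thAx hTG (LIK.fourax A h4)
      exact thMP hTG (thMP hTG (thAx hTG (LIK.a4 _ _)) h) hdd
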